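/- arXiv:2602.14748 — 2 statements merged into one kernel-verified Lean document; each statement's English description precedes it below -/
import Mathlib

section
/- Let L be a regular language over a finite alphabet Σ satisfying the algebraic semi-extensible ZG condition for some positive integer n with x^n ~_L x^{2n} for all words x. Then L is aperiodic: x^n ~_L x^{n+1} for every word x. -/
variable {α : Type*}

/-- `u` is a factor of `v`: `v = s ++ u ++ t` for some words `s, t`. -/
def IsFactor (u v : List α) : Prop := ∃ s t : List α, v = s ++ u ++ t

/-- A letter `e` is neutral for the language `L`. -/
def Neutral (L : Set (List α)) (e : α) : Prop :=
  ∀ s t : List α, s ++ t ∈ L ↔ s ++ [e] ++ t ∈ L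

/-- A language is extensible if it contains all extensions of its members. -/
def Extensible (L : Set (List α)) : Prop :=
  ∀ u v : List α, u ∈ L → IsFactor u v → v ∈ L

open Classical in
/-- `u_{-S}`: delete from `u` all occurrences of letters in `S`. -/
noncomputable def removeLetters (S : Set α) (u : List α) : List α :=
  u.filter (fun a => decide (a ∉ S))

/-- `Cond L S`: words `u` such that some `v ∈ L` has `v_{-S}` a factor of `u_{-S}`. -/
def Cond (L : Set (List α)) (S : Set α) : Set (List α) :=
  {u | ∃ v ∈ L, IsFactor (removeLetters S v) (removeLetters S u)}

open Classical in
/-- Number of occurrences of the letter `a` in the word `u`. -/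
noncomputable def countOcc (a : α) (u : List α) : ℕ :=
  u.countP (fun b => decide (b = a))

/-- `T_p(u)`: letters that are not neutral for `L` and occur at least `p` times in `u`. -/
def freqLetters (L : Set (List α)) (p : ℕ) (u : List α) : Set α :=
  {a | ¬ Neutral L a ∧ p ≤ countOcc a u}

/-- Operational semi-extensible ZG condition with threshold `p`. -/
def OperationalSE (L : Set (List α)) (p : ℕ) : Prop :=
  ∀ u : List α, freqLetters L p u = ∅ ∨
    (removeLetters (freqLetters L p u) u ∈ Cond L (freqLetters L p u) ↔ u ∈ L)

/-- Self-contained semi-extensible ZG condition with threshold `p`. -/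
def SelfContainedSE (L : Set (List α)) (p : ℕ) : Prop :=
  ∀ u v : List α, v ∈ L → freqLetters L p u ≠ ∅ →
    IsFactor (removeLetters (freqLetters L p u) v)
             (removeLetters (freqLetters L p u) u) →
    u ∈ L

/-- Syntactic congruence of `L`. -/
def SyntEq (L : Set (List α)) (u v : List α) : Prop :=
  ∀ s t : List α, s ++ u ++ t ∈ L ↔ s ++ v ++ t ∈ L

/-- The setoid on words given by the syntactic congruence of `L`. -/
def syntSetoid (L : Set (List α)) : Setoid (List α) where
  r := SyntEq L
  iseqv := ⟨fun _ _ _ => Iff.rfl, fun h s t => (h s t).symm,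
            fun h1 h2 s t => (h1 s t).trans (h2 s t)⟩

/-- `wpow x k` is the `k`-fold concatenation `x^k`. -/
def wpow (x : List α) : ℕ → List α
  | 0 => []
  | k + 1 => x ++ wpow x k

/-- Algebraic semi-extensible ZG condition for `n`: the ZG equation plus semi-extensibility. -/
def AlgebraicSE (L : Set (List α)) (n : ℕ) : Prop :=
  (∀ x y : List α, SyntEq L (y ++ wpow x (n+1)) (wpow x (n+1) ++ y)) ∧
  (∀ (x y z : List α) (a : α), ¬ Neutral L a → y ∈ L →
    x ++ y ++ z ++ wpow [a] n ∈ L)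

/-- `w[l..r]` with 1-based positions; empty when `r < l`. -/
def wslice (w : List α) (l r : ℕ) : List α := (w.drop (l - 1)).take (r + 1 - l)

/-- The pair `(l, r)` is good: `T_p(w[l..r]) ≠ ∅` and `w[l..r] ∈ Cond(T_p(w[l..r]))`. -/
def Good (L : Set (List α)) (p : ℕ) (w : List α) (l r : ℕ) : Prop :=
  freqLetters L p (wslice w l r) ≠ ∅ ∧
  wslice w l r ∈ Cond L (freqLetters L p (wslice w l r))

/-- The limit `r_l`: least `r ≥ l` such that `(l, r')` is good for all `r ≤ r' ≤ |w|`. -/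
noncomputable def limit (L : Set (List α)) (p : ℕ) (w : List α) (l : ℕ) : ℕ :=
  sInf {r | l ≤ r ∧ ∀ r' : ℕ, r ≤ r' → r' ≤ w.length → Good L p w l r'}


section ZGAux

variable {L : Set (List α)}

lemma SyntEq.appendCongr {u v u' v' : List α} (h : SyntEq L u v) (h' : SyntEq L u' v') :
    SyntEq L (u ++ u') (v ++ v') := by
  intro s t
  have h1 := h s (u' ++ t)
  have h2 := h' (s ++ v) t
  simp only [List.append_assoc] at h1 h2 ⊢
  exact h1.trans h2

instance zgMonoid : Monoid (Quotient (syntSetoid L)) where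
  mul a b := Quotient.liftOn₂ a b (fun u v => Quotient.mk (syntSetoid L) (u ++ v))
    (fun _ _ _ _ h h' => Quotient.sound (SyntEq.appendCongr h h'))
  one := Quotient.mk (syntSetoid L) []
  mul_assoc a b c := by
    induction a using Quotient.ind
    induction b using Quotient.ind
    induction c using Quotient.ind
    exact congrArg (Quotient.mk _) (List.append_assoc _ _ _)
  one_mul a := by
    induction a using Quotient.ind
    exact congrArg (Quotient.mk _) (List.nil_append _)
  mul_one a := by
    induction a using Quotient.ind
    exact congrArg (Quotient.mk _) (List.append_nil _)

lemma qk_mul (L : Set (List α)) (u v : List α) :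
    Quotient.mk (syntSetoid L) (u ++ v)
      = Quotient.mk (syntSetoid L) u * Quotient.mk (syntSetoid L) v := rfl

lemma qk_pow (L : Set (List α)) (u : List α) :
    ∀ k : ℕ, Quotient.mk (syntSetoid L) (wpow u k) = (Quotient.mk (syntSetoid L) u) ^ k
  | 0 => by rw [pow_zero]; rfl
  | k + 1 => by
      show Quotient.mk (syntSetoid L) (u ++ wpow u k) = _
      rw [qk_mul, qk_pow L u k, ← pow_succ']

lemma qk_syntEq {u v : List α}
    (h : Quotient.mk (syntSetoid L) u = Quotient.mk (syntSetoid L) v) : SyntEq L u v :=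
  Quotient.exact h

lemma SyntEq.memIff {u v : List α} (h : SyntEq L u v) : u ∈ L ↔ v ∈ L := by
  simpa using h [] []

lemma syntEq_nil_of_all_neutral :
    ∀ (x : List α), (∀ a ∈ x, Neutral L a) → SyntEq L x []
  | [], _ => fun _ _ => Iff.rfl
  | a :: x, h => by
      have hIH := syntEq_nil_of_all_neutral x (fun b hb => h b (List.mem_cons_of_mem _ hb))
      intro s t
      have h1 := (h a List.mem_cons_self) s (x ++ t)
      have h2 := hIH s t
      simp only [List.append_assoc, List.cons_append, List.nil_append,
        List.singleton_append] at h1 h2 ⊢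
      exact h1.symm.trans h2

lemma zg_pow_eq {M : Type*} [Monoid M] {n : ℕ} (hn : 0 < n)
    (hpow : ∀ m : M, m ^ n = m ^ (2 * n))
    {a b e : M} (hab : a * b = e) (hae : a * e = a) : a ^ n = e := by
  obtain ⟨m, rfl⟩ : ∃ m, n = m + 1 := ⟨n - 1, (Nat.succ_pred_eq_of_pos hn).symm⟩
  have hk : ∀ k, a ^ (k + 1) * b ^ (k + 1) = e := by
    intro k
    induction k with
    | zero => simpa using hab
    | succ k ih =>
      calc a ^ (k + 2) * b ^ (k + 2) = (a * a ^ (k + 1)) * (b ^ (k + 1) * b) := by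
            rw [pow_succ' a (k + 1), pow_succ b (k + 1)]
        _ = a * ((a ^ (k + 1) * b ^ (k + 1)) * b) := by simp only [mul_assoc]
        _ = a * (e * b) := by rw [ih]
        _ = (a * e) * b := by rw [← mul_assoc]
        _ = e := by rw [hae, hab]
  have hne : a ^ (m + 1) * e = a ^ (m + 1) := by
    rw [pow_succ, mul_assoc, hae]
  calc a ^ (m + 1) = a ^ (m + 1) * e := hne.symm
    _ = a ^ (m + 1) * (a ^ (m + 1) * b ^ (m + 1)) := by rw [hk m]
    _ = (a ^ (m + 1) * a ^ (m + 1)) * b ^ (m + 1) := by rw [mul_assoc]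
    _ = a ^ (2 * (m + 1)) * b ^ (m + 1) := by rw [← pow_add, two_mul]
    _ = a ^ (m + 1) * b ^ (m + 1) := by rw [← hpow a]
    _ = e := hk m

lemma zg_central_pow {M : Type*} [Monoid M] {n : ℕ}
    (hpow : ∀ m : M, m ^ n = m ^ (2 * n))
    (hzg : ∀ m c : M, c * m ^ (n + 1) = m ^ (n + 1) * c)
    (m c : M) : c * m ^ n = m ^ n * c := by
  have hkn : ∀ (x : M) (k : ℕ), x ^ ((k + 1) * n) = x ^ n := by
    intro x k
    induction k with
    | zero => norm_num
    | succ k ih => rw [add_mul, one_mul, pow_add, ih, ← pow_add, ← two_mul, ← hpow]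
  have h1 : m ^ n = (m ^ n) ^ (n + 1) := by
    rw [← pow_mul, mul_comm, hkn]
  rw [h1]
  exact hzg (m ^ n) c

lemma zg_absorb {M : Type*} [Monoid M] {n : ℕ} (hn : 0 < n)
    (hpow : ∀ m : M, m ^ n = m ^ (2 * n))
    (hcomm : ∀ m c : M, c * m ^ n = m ^ n * c)
    (U A V : M) : (U * A * V) ^ n * A ^ n = (U * A * V) ^ n := by
  obtain ⟨p, hp⟩ : ∃ p, n = p + 1 := ⟨n - 1, (Nat.succ_pred_eq_of_pos hn).symm⟩
  set X := U * A * V with hX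
  set e := X ^ n with he
  have ecomm : ∀ c : M, c * e = e * c := fun c => hcomm X c
  have ee : e * e = e := by rw [he, ← pow_add, ← two_mul, ← hpow]
  have epow : ∀ k, e ^ (k + 1) = e := by
    intro k
    induction k with
    | zero => exact pow_one e
    | succ k ih => rw [pow_succ, ih, ee]
  have hmul : ∀ c d : M, (e * c) * (e * d) = e * (c * d) := by
    intro c d
    calc (e * c) * (e * d) = e * ((c * e) * d) := by simp only [mul_assoc]
      _ = e * ((e * c) * d) := by rw [ecomm c]
      _ = (e * e) * (c * d) := by simp only [mul_assoc]
      _ = e * (c * d) := by rw [ee]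
  have eabs : ∀ c : M, (e * c) * e = e * c := by
    intro c
    calc (e * c) * e = e * (c * e) := by rw [mul_assoc]
      _ = e * (e * c) := by rw [ecomm c]
      _ = (e * e) * c := by rw [mul_assoc]
      _ = e * c := by rw [ee]
  set Z := e * X with hZ
  have hZn : Z ^ n = e := by
    have cEX : Commute e X := (ecomm X).symm
    rw [hZ, cEX.mul_pow, ← he, hp, epow, ee]
  have hA1A2 : (e * U) * (e * A) = e * (U * A) := hmul U A
  set D := e * (U * A) with hD
  set Q := e * (V * Z ^ p) with hQ
  have f1 : D * Q = e := by
    rw [hD, hQ, hmul]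
    rw [show (U * A) * (V * Z ^ p) = X * Z ^ p from by rw [hX]; simp only [mul_assoc]]
    rw [← mul_assoc, ← hZ, ← pow_succ' Z p, ← hp, hZn]
  have hDe : D * e = D := by rw [hD]; exact eabs (U * A)
  have hDn : D ^ n = e := zg_pow_eq hn hpow f1 hDe
  have hDn' : D ^ p * D = e := by rw [← pow_succ, ← hp, hDn]
  have heD : e * D = D := by rw [hD, ← mul_assoc, ee]
  have heQ : e * Q = Q := by rw [hQ, ← mul_assoc, ee]
  have f2 : Q * D = e := by
    calc Q * D = (e * Q) * D := by rw [heQ]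
      _ = ((D ^ p * D) * Q) * D := by rw [hDn']
      _ = D ^ p * ((D * Q) * D) := by simp only [mul_assoc]
      _ = D ^ p * (e * D) := by rw [f1]
      _ = D ^ p * D := by rw [heD]
      _ = e := hDn'
  set C := Q * (e * U) with hC
  have f3 : C * (e * A) = e := by
    calc C * (e * A) = Q * ((e * U) * (e * A)) := by rw [hC, mul_assoc]
      _ = Q * D := by rw [hA1A2]
      _ = e := f2
  have hCe : C * e = C := by
    rw [hC, mul_assoc, eabs U]
  have hCn : C ^ n = e := zg_pow_eq hn hpow f3 hCe
  have hCn' : C ^ p * C = e := by rw [← pow_succ, ← hp, hCn]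
  have hA2 : e * A = C ^ p * e := by
    calc e * A = (e * e) * A := by rw [ee]
      _ = e * (e * A) := by rw [mul_assoc]
      _ = (C ^ p * C) * (e * A) := by rw [hCn']
      _ = C ^ p * (C * (e * A)) := by rw [mul_assoc]
      _ = C ^ p * e := by rw [f3]
  have hEA : (e * A) ^ n = e := by
    rw [hA2]
    have c2 : Commute (C ^ p) e := ecomm (C ^ p)
    rw [c2.mul_pow, ← pow_mul, mul_comm p n, pow_mul, hCn, hp, epow, ← pow_succ, epow]
  have hcomm' : Commute e A := (ecomm A).symm
  have hfin : e ^ n * A ^ n = e := by rw [← hcomm'.mul_pow]; exact hEA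
  have epn : e ^ n = e := by rw [hp]; exact epow p
  rw [epn] at hfin
  exact hfin

end ZGAux

/-- semi-extensible ZG languages are aperiodic. -/
theorem aperiodic_of_algebraicSE {α : Type*} [Finite α] (L : Set (List α))
    (hreg : Finite (Quotient (syntSetoid L)))
    (n : ℕ) (hn : 0 < n)
    (hid : ∀ x : List α, SyntEq L (wpow x n) (wpow x (2 * n)))
    (halg : AlgebraicSE L n) :
    ∀ x : List α, SyntEq L (wpow x n) (wpow x (n + 1)) := by
  have hpowM : ∀ m : Quotient (syntSetoid L), m ^ n = m ^ (2 * n) := by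
    refine Quotient.ind fun u => ?_
    rw [← qk_pow, ← qk_pow]
    exact Quotient.sound (hid u)
  have hzgM : ∀ m c : Quotient (syntSetoid L), c * m ^ (n + 1) = m ^ (n + 1) * c := by
    refine Quotient.ind fun u => Quotient.ind fun y => ?_
    rw [← qk_pow, ← qk_mul, ← qk_mul]
    exact Quotient.sound (halg.1 u y)
  have hcommM : ∀ m c : Quotient (syntSetoid L), c * m ^ n = m ^ n * c :=
    zg_central_pow hpowM hzgM
  intro x
  by_cases hneu : ∀ a ∈ x, Neutral L a
  · have h0 : Quotient.mk (syntSetoid L) x = Quotient.mk (syntSetoid L) [] :=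
      Quotient.sound (syntEq_nil_of_all_neutral x hneu)
    have h1 : Quotient.mk (syntSetoid L) (wpow x n)
        = Quotient.mk (syntSetoid L) (wpow x (n + 1)) := by
      rw [qk_pow, qk_pow, h0]
      show (1 : Quotient (syntSetoid L)) ^ n = 1 ^ (n + 1)
      rw [one_pow, one_pow]
    exact qk_syntEq h1
  · push_neg at hneu
    obtain ⟨a, hax, hna⟩ := hneu
    obtain ⟨u, v, hsplit⟩ := List.append_of_mem hax
    obtain ⟨p, hp⟩ : ∃ p, n = p + 1 := ⟨n - 1, (Nat.succ_pred_eq_of_pos hn).symm⟩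
    have hXdec : Quotient.mk (syntSetoid L) x =
        Quotient.mk (syntSetoid L) u * Quotient.mk (syntSetoid L) [a]
          * Quotient.mk (syntSetoid L) v := by
      rw [← qk_mul, ← qk_mul, hsplit]
      exact congrArg (Quotient.mk _) (by simp)
    have habs : (Quotient.mk (syntSetoid L) x) ^ n * (Quotient.mk (syntSetoid L) [a]) ^ n
        = (Quotient.mk (syntSetoid L) x) ^ n := by
      rw [hXdec]
      exact zg_absorb hn hpowM hcommM _ _ _
    have key : ∀ W : Quotient (syntSetoid L),
        (Quotient.mk (syntSetoid L) x) ^ n * W * (Quotient.mk (syntSetoid L) [a]) ^ n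
          = (Quotient.mk (syntSetoid L) x) ^ n * W := by
      intro W
      rw [mul_assoc, hcommM, ← mul_assoc, habs]
    intro s t
    have e1 : Quotient.mk (syntSetoid L) (s ++ wpow x n ++ t)
        = Quotient.mk (syntSetoid L) (wpow x n ++ (s ++ t)) := by
      simp only [← List.append_assoc]
      simp only [qk_mul, qk_pow]
      rw [hcommM, mul_assoc]
    have e2 : Quotient.mk (syntSetoid L) (s ++ wpow x (n + 1) ++ t)
        = Quotient.mk (syntSetoid L) (wpow x (n + 1) ++ (s ++ t)) := by
      simp only [← List.append_assoc]
      simp only [qk_mul, qk_pow]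
      rw [hzgM, mul_assoc]
    have hfwd : wpow x n ++ (s ++ t) ∈ L → wpow x (n + 1) ++ (s ++ t) ∈ L := by
      intro h
      have h3 := halg.2 x (wpow x n ++ (s ++ t)) [] a hna h
      rw [List.append_nil] at h3
      have e3 : Quotient.mk (syntSetoid L) ((x ++ (wpow x n ++ (s ++ t))) ++ wpow [a] n)
          = Quotient.mk (syntSetoid L) (wpow x (n + 1) ++ (s ++ t)) := by
        simp only [qk_mul, qk_pow]
        calc Quotient.mk (syntSetoid L) x
              * ((Quotient.mk (syntSetoid L) x) ^ n
                * (Quotient.mk (syntSetoid L) s * Quotient.mk (syntSetoid L) t))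
              * (Quotient.mk (syntSetoid L) [a]) ^ n
            = Quotient.mk (syntSetoid L) x
              * ((Quotient.mk (syntSetoid L) x) ^ n
                * (Quotient.mk (syntSetoid L) s * Quotient.mk (syntSetoid L) t)
                * (Quotient.mk (syntSetoid L) [a]) ^ n) := by rw [mul_assoc]
          _ = Quotient.mk (syntSetoid L) x
              * ((Quotient.mk (syntSetoid L) x) ^ n
                * (Quotient.mk (syntSetoid L) s * Quotient.mk (syntSetoid L) t)) := by
                rw [key]
          _ = (Quotient.mk (syntSetoid L) x) ^ (n + 1)
              * (Quotient.mk (syntSetoid L) s * Quotient.mk (syntSetoid L) t) := by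
                rw [← mul_assoc, ← pow_succ']
      exact ((qk_syntEq e3).memIff).mp h3
    have hbwd : wpow x (n + 1) ++ (s ++ t) ∈ L → wpow x n ++ (s ++ t) ∈ L := by
      intro h
      have h3 := halg.2 (wpow x p) (wpow x (n + 1) ++ (s ++ t)) [] a hna h
      rw [List.append_nil] at h3
      have e4 : Quotient.mk (syntSetoid L)
            ((wpow x p ++ (wpow x (n + 1) ++ (s ++ t))) ++ wpow [a] n)
          = Quotient.mk (syntSetoid L) (wpow x n ++ (s ++ t)) := by
        simp only [qk_mul, qk_pow]
        calc (Quotient.mk (syntSetoid L) x) ^ p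
              * ((Quotient.mk (syntSetoid L) x) ^ (n + 1)
                * (Quotient.mk (syntSetoid L) s * Quotient.mk (syntSetoid L) t))
              * (Quotient.mk (syntSetoid L) [a]) ^ n
            = (Quotient.mk (syntSetoid L) x) ^ p * (Quotient.mk (syntSetoid L) x) ^ (n + 1)
              * (Quotient.mk (syntSetoid L) s * Quotient.mk (syntSetoid L) t)
              * (Quotient.mk (syntSetoid L) [a]) ^ n := by rw [← mul_assoc]
          _ = (Quotient.mk (syntSetoid L) x) ^ (p + (n + 1))
              * (Quotient.mk (syntSetoid L) s * Quotient.mk (syntSetoid L) t)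
              * (Quotient.mk (syntSetoid L) [a]) ^ n := by rw [← pow_add]
          _ = (Quotient.mk (syntSetoid L) x) ^ (2 * n)
              * (Quotient.mk (syntSetoid L) s * Quotient.mk (syntSetoid L) t)
              * (Quotient.mk (syntSetoid L) [a]) ^ n := by
                rw [show p + (n + 1) = 2 * n from by omega]
          _ = (Quotient.mk (syntSetoid L) x) ^ n
              * (Quotient.mk (syntSetoid L) s * Quotient.mk (syntSetoid L) t)
              * (Quotient.mk (syntSetoid L) [a]) ^ n := by rw [← hpowM]
          _ = (Quotient.mk (syntSetoid L) x) ^ n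
              * (Quotient.mk (syntSetoid L) s * Quotient.mk (syntSetoid L) t) := key _
      exact ((qk_syntEq e4).memIff).mp h3
    exact ((qk_syntEq e1).memIff).trans
      ((Iff.intro hfwd hbwd).trans ((qk_syntEq e2).memIff).symm)
end

section
/- Let L be a language over Σ, p ∈ ℕ a threshold, and w a word of length n over Σ. Then the limits are non-decreasing: for every l with 1 ≤ l < n, we have r_l ≤ r_{l+1}. -/
variable {α : Type*}

lemma removeLetters_removeLetters {S T : Set α} (h : S ⊆ T) (u : List α) :
    removeLetters T (removeLetters S u) = removeLetters T u := by
  unfold removeLetters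
  rw [List.filter_filter]
  congr 1
  funext a
  by_cases hT : a ∈ T
  · simp [hT]
  · have hS : a ∉ S := fun hs => hT (h hs)
    simp [hT, hS]

lemma IsFactor.trans {u v x : List α} (h1 : IsFactor u v) (h2 : IsFactor v x) :
    IsFactor u x := by
  obtain ⟨s, t, rfl⟩ := h1
  obtain ⟨s', t', rfl⟩ := h2
  exact ⟨s' ++ s, t ++ t', by simp⟩

lemma IsFactor.removeLetters {u v : List α} (S : Set α) (h : IsFactor u v) :
    IsFactor (removeLetters S u) (removeLetters S v) := by
  obtain ⟨s, t, rfl⟩ := h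
  exact ⟨_root_.removeLetters S s, _root_.removeLetters S t, by
    simp [_root_.removeLetters, List.filter_append]⟩

lemma countOcc_le_of_isFactor {u v : List α} (a : α) (h : IsFactor u v) :
    countOcc a u ≤ countOcc a v := by
  obtain ⟨s, t, rfl⟩ := h
  simp [countOcc, List.countP_append]
  omega

lemma freqLetters_mono {L : Set (List α)} {p : ℕ} {u v : List α} (h : IsFactor u v) :
    freqLetters L p u ⊆ freqLetters L p v := by
  intro a ⟨h1, h2⟩
  exact ⟨h1, le_trans h2 (countOcc_le_of_isFactor a h)⟩

lemma cond_mono {L : Set (List α)} {S S' : Set α} {u u' : List α}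
    (hS : S ⊆ S') (hu : IsFactor u u') (h : u ∈ Cond L S) : u' ∈ Cond L S' := by
  obtain ⟨v, hv, hf⟩ := h
  refine ⟨v, hv, ?_⟩
  have h1 : IsFactor (removeLetters S' (removeLetters S v))
      (removeLetters S' (removeLetters S u)) := hf.removeLetters S'
  rw [removeLetters_removeLetters hS, removeLetters_removeLetters hS] at h1
  exact h1.trans (hu.removeLetters S')

lemma wslice_cons {w : List α} {l r : ℕ} (h1 : 1 ≤ l) (h2 : l ≤ w.length)
    (h3 : l ≤ r) : wslice w l r = w[l-1]'(by omega) :: wslice w (l+1) r := by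
  unfold wslice
  have e1 : l + 1 - 1 = l - 1 + 1 := by omega
  have e2 : r + 1 - l = (r + 1 - (l+1)) + 1 := by omega
  rw [e1, e2, List.drop_eq_getElem_cons (by omega : l - 1 < w.length), List.take_succ_cons]

lemma good_mono {L : Set (List α)} {p : ℕ} {w : List α} {l r : ℕ}
    (h1 : 1 ≤ l) (h2 : l < w.length) (h3 : l + 1 ≤ r)
    (hg : Good L p w (l+1) r) : Good L p w l r := by
  have hfac : IsFactor (wslice w (l+1) r) (wslice w l r) := by
    rw [wslice_cons h1 (le_of_lt h2) (by omega)]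
    exact ⟨[w[l-1]'(by omega)], [], by simp⟩
  obtain ⟨hne, hc⟩ := hg
  have hsub := freqLetters_mono (L := L) (p := p) hfac
  constructor
  · intro h
    apply hne
    rw [Set.eq_empty_iff_forall_notMem] at h ⊢
    exact fun a ha => h a (hsub ha)
  · exact cond_mono hsub hfac hc

/-- the limits are non-decreasing in the left endpoint. -/
theorem limit_mono {α : Type*} (L : Set (List α)) (p : ℕ) (w : List α) :
    ∀ l : ℕ, 1 ≤ l → l < w.length → limit L p w l ≤ limit L p w (l + 1) := by
  intro l hl hlen
  simp only [limit]
  have hne : {r | l + 1 ≤ r ∧ ∀ r' : ℕ, r ≤ r' → r' ≤ w.length → Good L p w (l+1) r'}.Nonempty :=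
    ⟨max (l+1) (w.length + 1), le_max_left _ _, fun r' hr' hr'' => absurd hr'' (by omega)⟩
  have hm := Nat.sInf_mem hne
  obtain ⟨hm1, hm2⟩ := hm
  apply Nat.sInf_le
  refine ⟨by omega, fun r' hr' hr'' => ?_⟩
  exact good_mono hl hlen (by omega) (hm2 r' hr' hr'')
end
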